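/- Let L be a finite sublattice of the Boolean lattice of subsets of {1,...,n}, containing ∅ and {1,...,n}. Let p, q ∈ L be such that the interval [⋀N(q), q] is contained in the interval [⋀N(p), p] and both intervals are Boolean lattices. Then |q| - |N(q)| - |⋀N(q)| ≤ |p| - |N(p)| - |⋀N(p)|, where |·| denotes cardinality of the corresponding subset of {1,...,n}. -/

import Mathlib

/-- `q` is covered by `p` inside the finite sublattice `L` of the Boolean lattice. -/
def CoversIn {n : ℕ} (L : Finset (Finset (Fin n))) (q p : Finset (Fin n)) : Prop :=
  q ∈ L ∧ p ∈ L ∧ q ⊂ p ∧ ∀ r ∈ L, q ⊂ r → r ⊂ p → False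

/-- Meet (intersection) of the members of `S`, empty meet taken to be `p`. -/
def meetF {n : ℕ} (p : Finset (Fin n)) (S : Finset (Finset (Fin n))) : Finset (Fin n) :=
  (insert p S).inf id

/-- The interval `[a, b]` of the sublattice `L` is a Boolean lattice, i.e.
order-isomorphic to the lattice of subsets of a finite set. -/
def IsBooleanIntervalIn {n : ℕ} (L : Finset (Finset (Fin n))) (a b : Finset (Fin n)) : Prop :=
  ∃ k : ℕ, Nonempty ({r : Finset (Fin n) // r ∈ L ∧ a ⊆ r ∧ r ⊆ b} ≃o Finset (Fin k))

/-!
Booleanity of `[⋀N(p), p]` gives an order isomorphism `f` from the subsets of `Fin k` onto that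
interval of `L`; since `L` is a sublattice, `f` preserves `∪` and `∩`, so
`|f B| = |f ∅| + ∑_{i ∈ B} |f {i} \ f ∅|` with every summand positive. When all lower covers of
`f B` lie above `f ∅`, they are the `f (B.erase i)`, `i ∈ B`, and their meet is `f ∅`; hence
`|f B| - |N(f B)| - |⋀N(f B)| = ∑_{i ∈ B} (|f {i} \ f ∅| - 1)`, which grows with `B`. Finally
`p = f univ`, and the inclusion of intervals makes `q = f B` with all its lower covers above `f ∅`.
-/

open Finset

section OrderEmbedding

variable {α β : Type*} [Lattice α] [Lattice β]

theorem OrderEmbedding.map_sup_of_mem_range (f : α ↪o β) {x y : α}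
    (h : f x ⊔ f y ∈ Set.range f) : f (x ⊔ y) = f x ⊔ f y := by
  obtain ⟨z, hz⟩ := h
  refine le_antisymm ?_ (sup_le (f.monotone le_sup_left) (f.monotone le_sup_right))
  rw [← hz, f.le_iff_le]
  exact sup_le (f.le_iff_le.1 (hz ▸ le_sup_left)) (f.le_iff_le.1 (hz ▸ le_sup_right))

theorem OrderEmbedding.map_inf_of_mem_range (f : α ↪o β) {x y : α}
    (h : f x ⊓ f y ∈ Set.range f) : f (x ⊓ y) = f x ⊓ f y := by
  obtain ⟨z, hz⟩ := h
  refine le_antisymm (le_inf (f.monotone inf_le_left) (f.monotone inf_le_right)) ?_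
  rw [← hz, f.le_iff_le]
  exact le_inf (f.le_iff_le.1 (hz ▸ inf_le_left)) (f.le_iff_le.1 (hz ▸ inf_le_right))

def OrderEmbedding.toLatticeHomOfRange (f : α ↪o β) (hsup : ∀ x y, f x ⊔ f y ∈ Set.range f)
    (hinf : ∀ x y, f x ⊓ f y ∈ Set.range f) : LatticeHom α β where
  toFun := f
  map_sup' _ _ := f.map_sup_of_mem_range (hsup _ _)
  map_inf' _ _ := f.map_inf_of_mem_range (hinf _ _)

end OrderEmbedding

section LatticeHom

variable {ι α : Type*} [DecidableEq ι] [DecidableEq α]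

theorem LatticeHom.card_map_finset (f : LatticeHom (Finset ι) (Finset α)) (S : Finset ι) :
    #(f S) = #(f ∅) + ∑ i ∈ S, #(f {i} \ f ∅) := by
  induction S using Finset.induction_on with
  | empty => simp
  | insert i S hi ih =>
    have hunion : f (insert i S) = f {i} ∪ f S := by
      rw [insert_eq, ← sup_eq_union, map_sup, sup_eq_union]
    have hinter : f {i} ∩ f S = f ∅ := by
      rw [← inf_eq_inter, ← map_inf, inf_eq_inter, singleton_inter_of_notMem hi]
    rw [hunion, ← card_sdiff_add_card, ← sdiff_inter_self_left, hinter, ih, sum_insert hi]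
    ring

theorem LatticeHom.card_map_sub_card_mono (f : LatticeHom (Finset ι) (Finset α))
    (hf : Function.Injective f) {S T : Finset ι} (hST : S ⊆ T) :
    (#(f S) : ℤ) - #S ≤ #(f T) - #T := by
  have hsum : ∀ U, (#(f U) : ℤ) - #U = #(f ∅) + ∑ i ∈ U, ((#(f {i} \ f ∅) : ℤ) - 1) := by
    intro U
    rw [f.card_map_finset, sum_sub_distrib, card_eq_sum_ones U]
    push_cast
    ring
  rw [hsum, hsum]
  refine (add_le_add_iff_left _).2 (sum_le_sum_of_subset_of_nonneg hST fun i _ _ => ?_)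
  have hlt : f ∅ < f {i} := by
    refine lt_of_le_of_ne (OrderHomClass.mono f (empty_subset _)) fun h => ?_
    exact singleton_ne_empty i (hf h).symm
  have : 0 < #(f {i} \ f ∅) := card_pos.2 (sdiff_nonempty.2 (not_subset_of_ssubset hlt))
  omega

end LatticeHom

section Interval

variable {n k : ℕ} {L : Finset (Finset (Fin n))} {a b : Finset (Fin n)}

theorem meetF_subset {p r : Finset (Fin n)} {S : Finset (Finset (Fin n))}
    (hr : r ∈ insert p S) : meetF p S ⊆ r :=
  inf_le (f := id) hr

theorem meetF_mem (hLmeet : ∀ a ∈ L, ∀ b ∈ L, a ∩ b ∈ L) {p : Finset (Fin n)}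
    {S : Finset (Finset (Fin n))} (hp : p ∈ L) (hS : ∀ r ∈ S, r ∈ L) : meetF p S ∈ L := by
  refine InfClosed.finsetInf_mem (s := (L : Set (Finset (Fin n))))
    (fun r hr s hs => hLmeet r hr s hs) (insert_nonempty p S) fun r hr => ?_
  rcases mem_insert.1 hr with rfl | hr
  exacts [hp, hS r hr]

def intervalEmbedding (e : {r : Finset (Fin n) // r ∈ L ∧ a ⊆ r ∧ r ⊆ b} ≃o Finset (Fin k)) :
    Finset (Fin k) ↪o Finset (Fin n) :=
  e.symm.toOrderEmbedding.trans (OrderEmbedding.subtype _)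

variable (e : {r : Finset (Fin n) // r ∈ L ∧ a ⊆ r ∧ r ⊆ b} ≃o Finset (Fin k))

theorem mem_range_intervalEmbedding {r : Finset (Fin n)} :
    r ∈ Set.range (intervalEmbedding e) ↔ r ∈ L ∧ a ⊆ r ∧ r ⊆ b :=
  ⟨by rintro ⟨S, rfl⟩; exact (e.symm S).2, fun h => ⟨e ⟨r, h⟩, by simp [intervalEmbedding]⟩⟩

theorem intervalEmbedding_mem_range (S : Finset (Fin k)) :
    intervalEmbedding e S ∈ L ∧ a ⊆ intervalEmbedding e S ∧ intervalEmbedding e S ⊆ b :=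
  (mem_range_intervalEmbedding e).1 ⟨S, rfl⟩

theorem intervalEmbedding_univ (hb : b ∈ L) (hab : a ⊆ b) : intervalEmbedding e univ = b := by
  obtain ⟨S, hS⟩ := (mem_range_intervalEmbedding e).2 ⟨hb, hab, subset_rfl⟩
  refine subset_antisymm (intervalEmbedding_mem_range e univ).2.2 ?_
  exact hS.symm.subset.trans ((intervalEmbedding e).monotone (subset_univ S))

def intervalLatticeHom (hLmeet : ∀ a ∈ L, ∀ b ∈ L, a ∩ b ∈ L)
    (hLjoin : ∀ a ∈ L, ∀ b ∈ L, a ∪ b ∈ L) : LatticeHom (Finset (Fin k)) (Finset (Fin n)) :=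
  (intervalEmbedding e).toLatticeHomOfRange
    (fun S T => by
      obtain ⟨hSL, haS, hSb⟩ := intervalEmbedding_mem_range e S
      obtain ⟨hTL, -, hTb⟩ := intervalEmbedding_mem_range e T
      exact (mem_range_intervalEmbedding e).2
        ⟨hLjoin _ hSL _ hTL, haS.trans subset_union_left, union_subset hSb hTb⟩)
    (fun S T => by
      obtain ⟨hSL, haS, hSb⟩ := intervalEmbedding_mem_range e S
      obtain ⟨hTL, haT, -⟩ := intervalEmbedding_mem_range e T
      exact (mem_range_intervalEmbedding e).2
        ⟨hLmeet _ hSL _ hTL, subset_inter haS haT, inter_subset_left.trans hSb⟩)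

theorem coversIn_intervalEmbedding_iff {U B : Finset (Fin k)} :
    CoversIn L (intervalEmbedding e U) (intervalEmbedding e B) ↔ U ⋖ B := by
  set f := intervalEmbedding e
  refine ⟨fun ⟨_, _, hUB, hbetween⟩ => ⟨f.lt_iff_lt.1 hUB, fun C hUC hCB => ?_⟩,
    fun ⟨hUB, hbetween⟩ => ⟨(intervalEmbedding_mem_range e U).1,
      (intervalEmbedding_mem_range e B).1, f.lt_iff_lt.2 hUB, fun r hr hUr hrB => ?_⟩⟩
  · exact hbetween (f C) (intervalEmbedding_mem_range e C).1 (f.lt_iff_lt.2 hUC)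
      (f.lt_iff_lt.2 hCB)
  · obtain ⟨C, rfl⟩ := (mem_range_intervalEmbedding e).2
      ⟨hr, (intervalEmbedding_mem_range e U).2.1.trans hUr.subset,
        hrB.subset.trans (intervalEmbedding_mem_range e B).2.2⟩
    exact hbetween (f.lt_iff_lt.1 hUr) (f.lt_iff_lt.1 hrB)

theorem coe_intervalLatticeHom (hLmeet : ∀ a ∈ L, ∀ b ∈ L, a ∩ b ∈ L)
    (hLjoin : ∀ a ∈ L, ∀ b ∈ L, a ∪ b ∈ L) :
    ⇑(intervalLatticeHom e hLmeet hLjoin) = intervalEmbedding e :=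
  rfl

theorem card_eq_of_forall_mem_iff_coversIn {B : Finset (Fin k)} {N : Finset (Finset (Fin n))}
    (hN : ∀ r, r ∈ N ↔ CoversIn L r (intervalEmbedding e B))
    (ha : a ⊆ meetF (intervalEmbedding e B) N) : #N = #B := by
  set f := intervalEmbedding e
  have hN_image : N = B.image fun i => f (B.erase i) := by
    ext r
    rw [hN, mem_image]
    constructor
    · intro hr
      obtain ⟨U, rfl⟩ := (mem_range_intervalEmbedding e).2 ⟨hr.1,
        ha.trans (meetF_subset (mem_insert_of_mem ((hN _).2 hr))),
        hr.2.2.1.subset.trans (intervalEmbedding_mem_range e B).2.2⟩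
      obtain ⟨i, hi, rfl⟩ := covBy_iff_exists_erase.1 ((coversIn_intervalEmbedding_iff e).1 hr)
      exact ⟨i, hi, rfl⟩
    · rintro ⟨i, hi, rfl⟩
      exact (coversIn_intervalEmbedding_iff e).2 (erase_covBy hi)
  rw [hN_image]
  exact card_image_of_injOn (f.injective.comp_injOn (erase_injOn B))

theorem meetF_eq_intervalEmbedding_empty (hLmeet : ∀ a ∈ L, ∀ b ∈ L, a ∩ b ∈ L)
    {B : Finset (Fin k)} {N : Finset (Finset (Fin n))}
    (hN : ∀ r, r ∈ N ↔ CoversIn L r (intervalEmbedding e B))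
    (ha : a ⊆ meetF (intervalEmbedding e B) N) :
    meetF (intervalEmbedding e B) N = intervalEmbedding e ∅ := by
  set f := intervalEmbedding e
  obtain ⟨hBL, -, hBb⟩ := intervalEmbedding_mem_range e B
  obtain ⟨A, hA⟩ := (mem_range_intervalEmbedding e).2
    ⟨meetF_mem hLmeet hBL fun r hr => ((hN r).1 hr).1, ha,
      (meetF_subset (mem_insert_self _ _)).trans hBb⟩
  have hAB : A ⊆ B := f.le_iff_le.1 (hA ▸ meetF_subset (mem_insert_self _ _))
  have hA_erase : ∀ i ∈ B, A ⊆ B.erase i := fun i hi => f.le_iff_le.1 <| hA ▸ meetF_subset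
    (mem_insert_of_mem ((hN _).2 ((coversIn_intervalEmbedding_iff e).2 (erase_covBy hi))))
  rw [← hA, eq_empty_of_forall_notMem fun j hj => (mem_erase.1 (hA_erase j (hAB hj) hj)).1 rfl]

theorem card_sub_card_sub_card_meetF_eq (hLmeet : ∀ a ∈ L, ∀ b ∈ L, a ∩ b ∈ L)
    {B : Finset (Fin k)} {N : Finset (Finset (Fin n))}
    (hN : ∀ r, r ∈ N ↔ CoversIn L r (intervalEmbedding e B))
    (ha : a ⊆ meetF (intervalEmbedding e B) N) :
    (#(intervalEmbedding e B) : ℤ) - #N - #(meetF (intervalEmbedding e B) N) =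
      #(intervalEmbedding e B) - #B - #(intervalEmbedding e ∅) := by
  rw [card_eq_of_forall_mem_iff_coversIn e hN ha, meetF_eq_intervalEmbedding_empty e hLmeet hN ha]

end Interval

theorem stmt7_general {n : ℕ} (L : Finset (Finset (Fin n)))
    (hLmeet : ∀ a ∈ L, ∀ b ∈ L, a ∩ b ∈ L) (hLjoin : ∀ a ∈ L, ∀ b ∈ L, a ∪ b ∈ L)
    (p q : Finset (Fin n)) (hp : p ∈ L) (hq : q ∈ L)
    (Np Nq : Finset (Finset (Fin n)))
    (hNp : ∀ r, r ∈ Np ↔ CoversIn L r p) (hNq : ∀ r, r ∈ Nq ↔ CoversIn L r q)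
    (hsub₁ : meetF p Np ⊆ meetF q Nq) (hsub₂ : q ⊆ p)
    (hBp : IsBooleanIntervalIn L (meetF p Np) p) :
    (q.card : ℤ) - Nq.card - (meetF q Nq).card ≤ (p.card : ℤ) - Np.card - (meetF p Np).card := by
  obtain ⟨k, ⟨e⟩⟩ := hBp
  set f := intervalEmbedding e
  have hp_univ : f univ = p := intervalEmbedding_univ e hp (meetF_subset (mem_insert_self p Np))
  obtain ⟨B, rfl⟩ := (mem_range_intervalEmbedding e).2
    ⟨hq, hsub₁.trans (meetF_subset (mem_insert_self _ _)), hsub₂⟩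
  rw [← hp_univ] at hNp
  have hp_eq := card_sub_card_sub_card_meetF_eq e hLmeet hNp (by rw [hp_univ])
  rw [hp_univ] at hp_eq
  have hmono := (intervalLatticeHom e hLmeet hLjoin).card_map_sub_card_mono
    (intervalEmbedding e).injective (subset_univ B)
  rw [coe_intervalLatticeHom, hp_univ] at hmono
  rw [card_sub_card_sub_card_meetF_eq e hLmeet hNq hsub₁, hp_eq]
  linarith

/-- Let `L` be a finite sublattice of the Boolean lattice on `{1,...,n}`
containing `∅` and `{1,...,n}`, and `p, q ∈ L` with `[⋀N(q), q] ⊆ [⋀N(p), p]`, both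
intervals being Boolean. Then `|q| - |N(q)| - |⋀N(q)| ≤ |p| - |N(p)| - |⋀N(p)|`. -/
theorem stmt7 {n : ℕ} (L : Finset (Finset (Fin n)))
    (hLmeet : ∀ a ∈ L, ∀ b ∈ L, a ∩ b ∈ L) (hLjoin : ∀ a ∈ L, ∀ b ∈ L, a ∪ b ∈ L)
    (hbot : ∅ ∈ L) (htop : Finset.univ ∈ L)
    (p q : Finset (Fin n)) (hp : p ∈ L) (hq : q ∈ L)
    (Np Nq : Finset (Finset (Fin n)))
    (hNp : ∀ r, r ∈ Np ↔ CoversIn L r p) (hNq : ∀ r, r ∈ Nq ↔ CoversIn L r q)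
    (hsub₁ : meetF p Np ⊆ meetF q Nq) (hsub₂ : q ⊆ p)
    (hBp : IsBooleanIntervalIn L (meetF p Np) p)
    (hBq : IsBooleanIntervalIn L (meetF q Nq) q) :
    (q.card : ℤ) - Nq.card - (meetF q Nq).card ≤ (p.card : ℤ) - Np.card - (meetF p Np).card :=
  stmt7_general L hLmeet hLjoin p q hp hq Np Nq hNp hNq hsub₁ hsub₂ hBp
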